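/- arXiv:2106.13459 — 2 statements merged into one kernel-verified Lean document; each statement's English description precedes it below -/
import Mathlib

section
/- Let f ∈ C²_c([0,∞)), and define A f(λ) = β(λ_∞ - λ) f'(λ) + λ ∫ (f(λ + αz) - f(λ)) dν(z), and T^N f as the one-step operator of the exponential-kernel discrete Hawkes chain with step h_N = T/N. Then ‖(T^N f - f)/h_N - A f‖_∞ → 0 as N → ∞. -/
open MeasureTheory Filter

/-- One-step transition operator of the exponential-kernel discrete Hawkes chain with
step `h`. -/
noncomputable def dthpStepExp (lamInf α β h : ℝ) (ν : Measure ℝ) (f : ℝ → ℝ)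
    (y : ℝ) : ℝ :=
  f (lamInf * (1 - Real.exp (-β * h)) + y * Real.exp (-β * h)) * (1 - y * h) *
      (if y * h < 1 then 1 else 0) +
    (∫ z, f (lamInf * (1 - Real.exp (-β * h)) + (y + α * z) * Real.exp (-β * h)) ∂ν) *
      (y * h * (if y * h < 1 then 1 else 0) + (if 1 ≤ y * h then 1 else 0))

/-- Infinitesimal generator of the exponential Hawkes intensity. -/
noncomputable def hawkesGenExp (lamInf α β : ℝ) (ν : Measure ℝ) (f : ℝ → ℝ)
    (y : ℝ) : ℝ :=
  β * (lamInf - y) * deriv f y + y * ∫ z, (f (y + α * z) - f y) ∂ν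

/-!
Write `φ_h(w) = λ_∞ + (w - λ_∞) e^{-βh}` for the flow of the intensity between events. For
`yh < 1` the error `(T^N f - f)/h - A f` at `y` splits into the drift term
`(f(φ_h y) - f y)/h - β(λ_∞ - y) f'(y)`, which is `O(h)` by a second-order Taylor bound and
`1 - e^{-βh} = βh + O(h²)`, and the two jump terms `y (f y - f(φ_h y))` and
`y ∫ (f(φ_h(y + αz)) - f(y + αz)) dν(z)`, which are `O(h)` because `f` is Lipschitz,
`|φ_h w - w| ≤ |λ_∞ - w| βh` and `ν` has a finite mean. These bounds are uniform for `y ≤ R`.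
If `f` vanishes on `[M, ∞)` and `R = M e`, then for `βh ≤ 1` the flow started above `R` stays
above `M`, so both `T^N f` and `A f` vanish there.
-/

open Real Topology NNReal

theorem abs_sub_sub_deriv_mul_le_of_lipschitzWith {f : ℝ → ℝ} {K : ℝ≥0}
    (hf : Differentiable ℝ f) (hf' : LipschitzWith K (deriv f)) (x δ : ℝ) :
    |f (x + δ) - f x - deriv f x * δ| ≤ K * δ ^ 2 := by
  set F : ℝ → ℝ := fun u => f u - deriv f x * u
  have hF : ∀ u, HasDerivAt F (deriv f u - deriv f x) u := fun u => by
    have := (hf u).hasDerivAt.sub ((hasDerivAt_id u).const_mul (deriv f x))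
    rwa [mul_one] at this
  have hF' : ∀ u ∈ Metric.closedBall x |δ|, ‖deriv F u‖ ≤ K * |δ| := fun u hu => by
    rw [(hF u).deriv, ← dist_eq_norm]
    exact (hf'.dist_le_mul u x).trans (by gcongr; exact hu)
  have hmvt := (convex_closedBall x |δ|).norm_image_sub_le_of_norm_deriv_le
    (fun u _ => (hF u).differentiableAt) hF' (Metric.mem_closedBall_self (abs_nonneg δ))
    (show x + δ ∈ Metric.closedBall x |δ| by simp)
  calc |f (x + δ) - f x - deriv f x * δ| = ‖F (x + δ) - F x‖ := by
        rw [Real.norm_eq_abs]; congr 1; simp only [F]; ring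
    _ ≤ K * |δ| * ‖x + δ - x‖ := hmvt
    _ = K * δ ^ 2 := by
        rw [add_sub_cancel_left, Real.norm_eq_abs, mul_assoc, abs_mul_abs_self, sq]

theorem one_sub_exp_neg_nonneg {x : ℝ} (hx : 0 ≤ x) : 0 ≤ 1 - exp (-x) :=
  sub_nonneg.mpr (exp_le_one_iff.mpr (neg_nonpos.mpr hx))

theorem one_sub_exp_neg_le_self (x : ℝ) : 1 - exp (-x) ≤ x := by
  linarith [add_one_le_exp (-x)]

theorem abs_one_sub_exp_neg_sub_self_le_sq {x : ℝ} (hx : |x| ≤ 1) :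
    |1 - exp (-x) - x| ≤ x ^ 2 := by
  have := abs_exp_sub_one_sub_id_le (x := -x) (by rwa [abs_neg])
  rwa [neg_sq, ← abs_neg, show -(exp (-x) - 1 - -x) = 1 - exp (-x) - x by ring] at this

theorem HasCompactSupport.integrable_comp {X α E : Type*} [TopologicalSpace X]
    [NormedAddCommGroup E] [TopologicalSpace α] [MeasurableSpace α] [OpensMeasurableSpace α]
    [SecondCountableTopologyEither α E]
    {ν : Measure α} [IsFiniteMeasure ν] {f : X → E} {g : α → X}
    (hsupp : HasCompactSupport f) (hf : Continuous f) (hg : Continuous g) :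
    Integrable (fun z => f (g z)) ν := by
  obtain ⟨C, hC⟩ := hsupp.exists_bound_of_continuous hf
  exact .of_bound (hf.comp hg).aestronglyMeasurable C (ae_of_all _ fun z => hC (g z))

theorem tendsto_iSup_abs_of_eventually_le_mul {ι κ : Type*} [Nonempty ι] {l : Filter κ}
    {g : ℝ → ι → ℝ} {u : κ → ℝ} {C : ℝ} (hu : Tendsto u l (𝓝[>] 0))
    (hg : ∀ᶠ h in 𝓝[>] 0, ∀ i, |g h i| ≤ C * h) :
    Tendsto (fun k => ⨆ i, |g (u k) i|) l (𝓝 0) := by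
  refine squeeze_zero' (.of_forall fun k => Real.iSup_nonneg fun i => abs_nonneg _)
    ((hu.eventually hg).mono fun k hk => ciSup_le hk) ?_
  simpa using (tendsto_nhds_of_tendsto_nhdsWithin hu).const_mul C

/-- The intensity `λ_∞ + (w - λ_∞) e^{-βh}` reached from `w` after time `h` without events. -/
noncomputable def hawkesFlowExp (lamInf β h w : ℝ) : ℝ :=
  lamInf * (1 - exp (-β * h)) + w * exp (-β * h)

section HawkesFlow

variable {lamInf β h : ℝ}

theorem hawkesFlowExp_sub_self (w : ℝ) :
    hawkesFlowExp lamInf β h w - w = (lamInf - w) * (1 - exp (-β * h)) := by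
  unfold hawkesFlowExp; ring

theorem abs_hawkesFlowExp_sub_self_le (hβh : 0 ≤ β * h) (w : ℝ) :
    |hawkesFlowExp lamInf β h w - w| ≤ |lamInf - w| * (β * h) := by
  rw [hawkesFlowExp_sub_self, abs_mul, neg_mul, abs_of_nonneg (one_sub_exp_neg_nonneg hβh)]
  gcongr
  exact one_sub_exp_neg_le_self (β * h)

theorem hawkesFlowExp_monotone : Monotone (hawkesFlowExp lamInf β h) := fun _ _ hvw => by
  unfold hawkesFlowExp; gcongr

theorem mul_exp_le_hawkesFlowExp (hlam : 0 ≤ lamInf) (hβh : 0 ≤ β * h) (w : ℝ) :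
    w * exp (-β * h) ≤ hawkesFlowExp lamInf β h w := by
  have hexp := one_sub_exp_neg_nonneg hβh
  rw [← neg_mul] at hexp
  unfold hawkesFlowExp
  linarith [mul_nonneg hlam hexp]

theorem LipschitzWith.abs_comp_hawkesFlowExp_sub_le {f : ℝ → ℝ} {K : ℝ≥0}
    (hf : LipschitzWith K f) (hβh : 0 ≤ β * h) (w : ℝ) :
    |f (hawkesFlowExp lamInf β h w) - f w| ≤ K * (|lamInf - w| * (β * h)) := by
  rw [← Real.dist_eq]
  exact (hf.dist_le_mul _ _).trans (by gcongr; exact abs_hawkesFlowExp_sub_self_le hβh w)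

end HawkesFlow

section HawkesStep

variable {lamInf α β h : ℝ} {ν : Measure ℝ} {f : ℝ → ℝ} {y : ℝ}

theorem dthpStepExp_eq_hawkesFlowExp :
    dthpStepExp lamInf α β h ν f y =
      f (hawkesFlowExp lamInf β h y) * (1 - y * h) * (if y * h < 1 then 1 else 0) +
        (∫ z, f (hawkesFlowExp lamInf β h (y + α * z)) ∂ν) *
          (y * h * (if y * h < 1 then 1 else 0) + (if 1 ≤ y * h then 1 else 0)) :=
  rfl

theorem dthpStepExp_of_mul_lt_one (hyh : y * h < 1) :
    dthpStepExp lamInf α β h ν f y =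
      f (hawkesFlowExp lamInf β h y) * (1 - y * h) +
        (∫ z, f (hawkesFlowExp lamInf β h (y + α * z)) ∂ν) * (y * h) := by
  simp [dthpStepExp_eq_hawkesFlowExp, hyh, not_le.mpr hyh]

theorem dthpStepExp_eq_zero_of_le {M : ℝ} (hfM : ∀ x, M ≤ x → f x = 0) (hν : ∀ᵐ z ∂ν, 0 ≤ z)
    (hα : 0 ≤ α) (hlam : 0 ≤ lamInf) (hβh : 0 ≤ β * h) (hy : M ≤ y * exp (-β * h)) :
    dthpStepExp lamInf α β h ν f y = 0 := by
  have hflow : ∀ z, 0 ≤ z → f (hawkesFlowExp lamInf β h (y + α * z)) = 0 := fun z hz =>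
    hfM _ <| hy.trans <| (mul_exp_le_hawkesFlowExp hlam hβh y).trans <|
      hawkesFlowExp_monotone (le_add_of_nonneg_right (mul_nonneg hα hz))
  have hint : ∫ z, f (hawkesFlowExp lamInf β h (y + α * z)) ∂ν = 0 :=
    integral_eq_zero_of_ae (hν.mono hflow)
  have hfy : f (hawkesFlowExp lamInf β h y) = 0 := by simpa using hflow 0 le_rfl
  simp [dthpStepExp_eq_hawkesFlowExp, hfy, hint]

theorem hawkesGenExp_eq_zero_of_le {M : ℝ} (hfM : ∀ x, M ≤ x → f x = 0)
    (hf'M : ∀ x, M ≤ x → deriv f x = 0) (hν : ∀ᵐ z ∂ν, 0 ≤ z) (hα : 0 ≤ α) (hy : M ≤ y) :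
    hawkesGenExp lamInf α β ν f y = 0 := by
  have hint : ∫ z, (f (y + α * z) - f y) ∂ν = 0 :=
    integral_eq_zero_of_ae <| hν.mono fun z hz => by
      simp [hfM y hy, hfM _ (hy.trans (le_add_of_nonneg_right (mul_nonneg hα hz)))]
  simp [hawkesGenExp, hf'M y hy, hint]

end HawkesStep

section GeneratorError

variable {lamInf α β h : ℝ} {ν : Measure ℝ} [IsProbabilityMeasure ν] {f : ℝ → ℝ} {y : ℝ}

theorem dthpStepExp_sub_div_sub_hawkesGenExp_eq (hh : h ≠ 0) (hyh : y * h < 1)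
    (hI : Integrable (fun z => f (hawkesFlowExp lamInf β h (y + α * z))) ν)
    (hJ : Integrable (fun z => f (y + α * z)) ν) :
    (dthpStepExp lamInf α β h ν f y - f y) / h - hawkesGenExp lamInf α β ν f y =
      ((f (hawkesFlowExp lamInf β h y) - f y) / h - β * (lamInf - y) * deriv f y) +
        y * (f y - f (hawkesFlowExp lamInf β h y)) +
        y * ∫ z, (f (hawkesFlowExp lamInf β h (y + α * z)) - f (y + α * z)) ∂ν := by
  rw [dthpStepExp_of_mul_lt_one hyh, hawkesGenExp, integral_sub hI hJ,
    integral_sub hJ (integrable_const _), integral_const, probReal_univ, one_smul]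
  field_simp
  ring

theorem abs_drift_error_le {K₁ K₂ : ℝ≥0} (hf : Differentiable ℝ f) (hf₁ : LipschitzWith K₁ f)
    (hf₂ : LipschitzWith K₂ (deriv f)) (hh : 0 < h) (hβh : 0 ≤ β * h) (hβh₁ : β * h ≤ 1) :
    |(f (hawkesFlowExp lamInf β h y) - f y) / h - β * (lamInf - y) * deriv f y| ≤
      (K₂ * (lamInf - y) ^ 2 * β ^ 2 + K₁ * |lamInf - y| * β ^ 2) * h := by
  set δ := (lamInf - y) * (1 - exp (-β * h))
  have hflow : hawkesFlowExp lamInf β h y = y + δ := by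
    linarith [hawkesFlowExp_sub_self (lamInf := lamInf) (β := β) (h := h) y]
  have hδ : |δ| ≤ |lamInf - y| * (β * h) := by
    simpa [hflow] using abs_hawkesFlowExp_sub_self_le (lamInf := lamInf) hβh y
  have hd : |deriv f y| ≤ K₁ := by simpa using norm_deriv_le_of_lipschitz hf₁ (x₀ := y)
  have hexp := abs_one_sub_exp_neg_sub_self_le_sq (x := β * h) (by rwa [abs_of_nonneg hβh])
  rw [← neg_mul] at hexp
  have hsplit : (f (y + δ) - f y) / h - β * (lamInf - y) * deriv f y =
      ((f (y + δ) - f y - deriv f y * δ) +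
        deriv f y * (lamInf - y) * (1 - exp (-β * h) - β * h)) / h := by
    simp only [δ]
    field_simp
    ring
  rw [hflow, hsplit, abs_div, abs_of_pos hh, div_le_iff₀ hh]
  calc _ ≤ |f (y + δ) - f y - deriv f y * δ| +
        |deriv f y| * |lamInf - y| * |1 - exp (-β * h) - β * h| := by
        grw [abs_add_le]; simp [abs_mul]
    _ ≤ K₂ * (|lamInf - y| * (β * h)) ^ 2 + K₁ * |lamInf - y| * (β * h) ^ 2 := by
        have hδ2 : δ ^ 2 ≤ (|lamInf - y| * (β * h)) ^ 2 := by
          rw [← sq_abs]; exact pow_le_pow_left₀ (abs_nonneg _) hδ 2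
        gcongr
        exact (abs_sub_sub_deriv_mul_le_of_lipschitzWith hf hf₂ y δ).trans (by gcongr)
    _ = _ := by rw [← sq_abs (lamInf - y)]; ring

theorem abs_integral_jump_error_le {K : ℝ≥0} (hf : LipschitzWith K f) (hν : ∀ᵐ z ∂ν, 0 ≤ z)
    (hmean : Integrable id ν) (hα : 0 ≤ α) (hlam : 0 ≤ lamInf) (hy : 0 ≤ y) (hβh : 0 ≤ β * h) :
    |∫ z, (f (hawkesFlowExp lamInf β h (y + α * z)) - f (y + α * z)) ∂ν| ≤
      K * (lamInf + y + α * ∫ z, z ∂ν) * (β * h) := by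
  have hαz : Integrable (fun z => α * z) ν := hmean.const_mul α
  have hmean' : Integrable (fun z => lamInf + y + α * z) ν := (integrable_const _).add hαz
  calc |∫ z, (f (hawkesFlowExp lamInf β h (y + α * z)) - f (y + α * z)) ∂ν|
        ≤ ∫ z, K * (lamInf + y + α * z) * (β * h) ∂ν := by
        rw [← Real.norm_eq_abs]
        refine norm_integral_le_of_norm_le ((hmean'.const_mul _).mul_const _)
          (hν.mono fun z hz => ?_)
        rw [Real.norm_eq_abs, mul_assoc]
        refine (hf.abs_comp_hawkesFlowExp_sub_le hβh _).trans ?_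
        gcongr
        exact abs_le.2 ⟨by nlinarith, by nlinarith⟩
    _ = _ := by
        rw [integral_mul_const, integral_const_mul, integral_add (integrable_const _) hαz,
          integral_const, integral_const_mul]
        simp

end GeneratorError

section UniformBound

variable {lamInf α β : ℝ} {ν : Measure ℝ} [IsProbabilityMeasure ν] {f : ℝ → ℝ}

theorem exists_abs_generator_error_le_of_le {K₁ K₂ : ℝ≥0} (hf : Differentiable ℝ f)
    (hsupp : HasCompactSupport f) (hf₁ : LipschitzWith K₁ f) (hf₂ : LipschitzWith K₂ (deriv f))
    (hν : ∀ᵐ z ∂ν, 0 ≤ z) (hmean : Integrable id ν) (hα : 0 ≤ α) (hlam : 0 ≤ lamInf)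
    (hβ : 0 ≤ β) (R : ℝ) :
    ∃ C, ∀ h y, 0 < h → β * h ≤ 1 → R * h < 1 → 0 ≤ y → y ≤ R →
      |(dthpStepExp lamInf α β h ν f y - f y) / h - hawkesGenExp lamInf α β ν f y| ≤ C * h := by
  refine ⟨K₂ * (lamInf + R) ^ 2 * β ^ 2 + K₁ * (lamInf + R) * β ^ 2 +
    R * K₁ * (lamInf + R) * β + R * K₁ * (lamInf + R + α * ∫ z, z ∂ν) * β,
    fun h y hh hβh₁ hRh hy hyR => ?_⟩
  have hβh : 0 ≤ β * h := mul_nonneg hβ hh.le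
  have hyh : y * h < 1 := lt_of_le_of_lt (by gcongr) hRh
  have hly : |lamInf - y| ≤ lamInf + R := abs_le.2 ⟨by linarith, by linarith⟩
  have hly2 : (lamInf - y) ^ 2 ≤ (lamInf + R) ^ 2 := sq_le_sq' (by linarith) (by linarith)
  rw [dthpStepExp_sub_div_sub_hawkesGenExp_eq hh.ne' hyh
    (hsupp.integrable_comp hf.continuous (by unfold hawkesFlowExp; fun_prop))
    (hsupp.integrable_comp hf.continuous (by fun_prop))]
  have hdrift : |(f (hawkesFlowExp lamInf β h y) - f y) / h - β * (lamInf - y) * deriv f y| ≤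
      (K₂ * (lamInf + R) ^ 2 * β ^ 2 + K₁ * (lamInf + R) * β ^ 2) * h :=
    (abs_drift_error_le hf hf₁ hf₂ hh hβh hβh₁).trans (by gcongr)
  have hflow : |f y - f (hawkesFlowExp lamInf β h y)| ≤ K₁ * ((lamInf + R) * (β * h)) := by
    rw [abs_sub_comm]
    exact (hf₁.abs_comp_hawkesFlowExp_sub_le hβh y).trans (by gcongr)
  have hjump : |∫ z, (f (hawkesFlowExp lamInf β h (y + α * z)) - f (y + α * z)) ∂ν| ≤
      K₁ * (lamInf + R + α * ∫ z, z ∂ν) * (β * h) :=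
    (abs_integral_jump_error_le hf₁ hν hmean hα hlam hy hβh).trans (by gcongr)
  calc _ ≤ |(f (hawkesFlowExp lamInf β h y) - f y) / h - β * (lamInf - y) * deriv f y| +
        y * |f y - f (hawkesFlowExp lamInf β h y)| +
        y * |∫ z, (f (hawkesFlowExp lamInf β h (y + α * z)) - f (y + α * z)) ∂ν| := by
        grw [abs_add_le, abs_add_le]; simp [abs_mul, abs_of_nonneg hy]
    _ ≤ (K₂ * (lamInf + R) ^ 2 * β ^ 2 + K₁ * (lamInf + R) * β ^ 2) * h +
        R * (K₁ * ((lamInf + R) * (β * h))) +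
        R * (K₁ * (lamInf + R + α * ∫ z, z ∂ν) * (β * h)) := by
        have hR : 0 ≤ R := hy.trans hyR
        gcongr
    _ = _ := by ring

theorem eventually_abs_generator_error_le (hf : ContDiff ℝ 2 f) (hsupp : HasCompactSupport f)
    (hν : ∀ᵐ z ∂ν, 0 ≤ z) (hmean : Integrable id ν) (hα : 0 ≤ α) (hlam : 0 ≤ lamInf)
    (hβ : 0 ≤ β) :
    ∃ C, ∀ᶠ h in 𝓝[>] 0, ∀ y, 0 ≤ y →
      |(dthpStepExp lamInf α β h ν f y - f y) / h - hawkesGenExp lamInf α β ν f y| ≤ C * h := by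
  obtain ⟨K₁, hf₁⟩ := hf.lipschitzWith_of_hasCompactSupport hsupp two_ne_zero
  obtain ⟨K₂, hf₂⟩ :=
    (hf.deriv' (n := 1)).lipschitzWith_of_hasCompactSupport hsupp.deriv one_ne_zero
  obtain ⟨M₀, hM₀, hfM⟩ := hsupp.exists_pos_le_norm
  obtain ⟨M₁, -, hf'M⟩ := hsupp.deriv.exists_pos_le_norm
  set M := max M₀ M₁
  have hM : 0 ≤ M := hM₀.le.trans (le_max_left _ _)
  set R := M * exp 1
  have hMR : M ≤ R := le_mul_of_one_le_right hM (one_le_exp zero_le_one)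
  obtain ⟨C, hC⟩ := exists_abs_generator_error_le_of_le (hf.differentiable two_ne_zero) hsupp
    hf₁ hf₂ hν hmean hα hlam hβ R
  have hsmall : ∀ c : ℝ, ∀ᶠ h in 𝓝[>] (0 : ℝ), c * h < 1 := fun c =>
    eventually_nhdsWithin_of_eventually_nhds <|
      ((continuous_const_mul c).tendsto' 0 0 (mul_zero c)).eventually_lt_const one_pos
  refine ⟨C, ?_⟩
  filter_upwards [self_mem_nhdsWithin, hsmall β, hsmall R] with h hh hβh hRh y hy
  rcases le_or_gt y R with hyR | hRy
  · exact hC h y hh hβh.le hRh hy hyR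
  have hfM' : ∀ x, M ≤ x → f x = 0 := fun x hx =>
    hfM x ((le_max_left _ _).trans (hx.trans (le_abs_self x)))
  have hf'M' : ∀ x, M ≤ x → deriv f x = 0 := fun x hx =>
    hf'M x ((le_max_right _ _).trans (hx.trans (le_abs_self x)))
  have hflow : M ≤ y * exp (-β * h) := calc
    M = R * exp (-1) := by rw [mul_assoc, ← exp_add]; simp
    _ ≤ y * exp (-β * h) := by gcongr; linarith
  rw [dthpStepExp_eq_zero_of_le hfM' hν hα hlam (mul_nonneg hβ hh.le) hflow,
    hawkesGenExp_eq_zero_of_le hfM' hf'M' hν hα (hMR.trans hRy.le), hfM' y (hMR.trans hRy.le)]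
  simpa using (abs_nonneg _).trans (hC h 0 hh hβh.le hRh le_rfl (hM.trans hMR))

end UniformBound

/-- For `f ∈ C²_c([0,∞))`, the discrete generators `(T^N f - f)/h_N` of the
exponential-kernel discrete Hawkes chain converge uniformly on `[0, ∞)` to the
generator `A f` of the continuous Hawkes intensity, as `N → ∞` (with `h_N = T/N`). -/
theorem dthp_generator_convergence_exp
    (lamInf α β T : ℝ) (hlam : 0 < lamInf) (hα : 0 < α) (hβ : 0 < β) (hT : 0 < T)
    (ν : Measure ℝ) [IsProbabilityMeasure ν]
    (hνsupp : ν (Set.Iio 0) = 0) (hνmean : Integrable id ν)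
    (f : ℝ → ℝ) (hf : ContDiff ℝ 2 f) (hsupp : HasCompactSupport f) :
    Tendsto
      (fun N : ℕ => ⨆ y : {y : ℝ // 0 ≤ y},
        |(dthpStepExp lamInf α β (T / N) ν f y - f y) / (T / N) -
          hawkesGenExp lamInf α β ν f y|)
      atTop (nhds 0) := by
  have hν : ∀ᵐ z ∂ν, 0 ≤ z := by
    rw [ae_iff]; simp only [not_le]; exact hνsupp
  have hTN : Tendsto (fun N : ℕ => T / N) atTop (𝓝[>] 0) :=
    tendsto_nhdsWithin_iff.2 ⟨tendsto_const_div_atTop_nhds_zero_nat T,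
      (eventually_gt_atTop 0).mono fun N hN => by simp only [Set.mem_Ioi]; positivity⟩
  obtain ⟨C, hC⟩ := eventually_abs_generator_error_le hf hsupp hν hνmean hα.le hlam.le hβ.le
  exact tendsto_iSup_abs_of_eventually_le_mul (ι := {y : ℝ // 0 ≤ y}) hTN
    (hC.mono fun h hh y => hh y y.2)
end

section
/- Let f ∈ C²_c([0,∞)²), and define A f(λ,ξ) = (ξ + β(λ_∞ - λ)) ∂_λ f(λ,ξ) - βξ ∂_ξ f(λ,ξ) + λ ∫ (f(λ, ξ + αz) - f(λ,ξ)) dν(z), and T^N f the one-step operator of the Erlang-kernel discrete Hawkes chain with step h_N = T/N. Then ‖(T^N f - f)/h_N - A f‖_∞ → 0 as N → ∞. -/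
open MeasureTheory Filter

/-- One-step transition operator of the Erlang-kernel discrete Hawkes chain with
step `h`. -/
noncomputable def dthpStepErlang (lamInf α β h : ℝ) (ν : Measure ℝ)
    (f : ℝ × ℝ → ℝ) (y v : ℝ) : ℝ :=
  f (lamInf * (1 - Real.exp (-β * h)) + y * Real.exp (-β * h) +
        v * h * Real.exp (-β * h), v * Real.exp (-β * h)) * (1 - y * h) *
      (if y * h < 1 then 1 else 0) +
    (∫ z, f (lamInf * (1 - Real.exp (-β * h)) + y * Real.exp (-β * h) +
          h * (v + α * z) * Real.exp (-β * h), (v + α * z) * Real.exp (-β * h)) ∂ν) *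
      (y * h * (if y * h < 1 then 1 else 0) + (if 1 ≤ y * h then 1 else 0))

/-- Infinitesimal generator of the Erlang Hawkes intensity–auxiliary process pair:
`A f(λ,ξ) = (ξ + β(λ_∞-λ)) ∂_λ f - βξ ∂_ξ f + λ ∫ (f(λ, ξ+αz) - f(λ,ξ)) dν(z)`. -/
noncomputable def hawkesGenErlang (lamInf α β : ℝ) (ν : Measure ℝ)
    (f : ℝ × ℝ → ℝ) (y v : ℝ) : ℝ :=
  (v + β * (lamInf - y)) * fderiv ℝ f (y, v) (1, 0) -
    β * v * fderiv ℝ f (y, v) (0, 1) +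
    y * ∫ z, (f (y, v + α * z) - f (y, v)) ∂ν


lemma exp_neg_bounds (x : ℝ) (hx : 0 ≤ x) :
    1 - x ≤ Real.exp (-x) ∧ Real.exp (-x) ≤ 1 - x + x ^ 2 := by
  constructor
  · linarith [Real.add_one_le_exp (-x)]
  · have key : Real.exp (-x) * Real.exp x = 1 := by
      rw [← Real.exp_add]; simp
    have h1 := Real.add_one_le_exp x
    have h2 := Real.exp_pos x
    have h3 := Real.exp_pos (-x)
    nlinarith [sq_nonneg (x - 1), sq_nonneg x, mul_pos h3 h2,
      mul_le_mul_of_nonneg_left h1 h3.le]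

lemma prod_norm_le (x : ℝ × ℝ) {c : ℝ} (h1 : |x.1| ≤ c) (h2 : |x.2| ≤ c) : ‖x‖ ≤ c := by
  rw [Prod.norm_def]
  exact max_le (by simpa [Real.norm_eq_abs] using h1) (by simpa [Real.norm_eq_abs] using h2)

lemma norm_sub_le_of_mem_segment' {E : Type*} [NormedAddCommGroup E] [NormedSpace ℝ E]
    {p q x : E} (hx : x ∈ segment ℝ p q) : ‖x - p‖ ≤ ‖q - p‖ := by
  obtain ⟨a, b, ha, hb, hab, rfl⟩ := hx
  have : a • p + b • q - p = b • (q - p) := by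
    have : a = 1 - b := by linarith
    subst this
    module
  rw [this, norm_smul, Real.norm_eq_abs, abs_of_nonneg hb]
  nlinarith [norm_nonneg (q - p)]

lemma taylor2 {f : ℝ × ℝ → ℝ} (hf : ContDiff ℝ 2 f) {M2 : ℝ}
    (hM2 : ∀ x, ‖fderiv ℝ (fderiv ℝ f) x‖ ≤ M2) (p q : ℝ × ℝ) :
    ‖f q - f p - fderiv ℝ f p (q - p)‖ ≤ M2 * ‖q - p‖ * ‖q - p‖ := by
  have hd1 : Differentiable ℝ f := hf.differentiable two_ne_zero
  have hcd1 : ContDiff ℝ 1 (fderiv ℝ f) :=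
    hf.fderiv_right (by norm_num)
  have hd2 : Differentiable ℝ (fderiv ℝ f) := hcd1.differentiable one_ne_zero
  have lipD : ∀ x, ‖fderiv ℝ f x - fderiv ℝ f p‖ ≤ M2 * ‖x - p‖ := by
    intro x
    exact (convex_univ : Convex ℝ (Set.univ : Set (ℝ × ℝ))).norm_image_sub_le_of_norm_fderiv_le
      (fun z _ => hd2 z) (fun z _ => hM2 z) trivial trivial
  have := (convex_segment p q).norm_image_sub_le_of_norm_fderiv_le'
    (f := f) (φ := fderiv ℝ f p) (C := M2 * ‖q - p‖)
    (fun x _ => hd1 x)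
    (fun x hx => le_trans (lipD x) (by
      have h1 := norm_sub_le_of_mem_segment' hx
      have h2 : 0 ≤ M2 := le_trans (norm_nonneg (fderiv ℝ (fderiv ℝ f) p)) (hM2 p)
      nlinarith))
    (left_mem_segment ℝ p q) (right_mem_segment ℝ p q)
  linarith

lemma norm1_bound {lamInf C β h y v E c1 : ℝ} (hlam : 0 < lamInf) (hβ : 0 < β)
    (hC0 : 0 < C) (hh : 0 < h) (hy : 0 ≤ y) (hv : 0 ≤ v) (hyC : y ≤ C) (hvC : v ≤ C)
    (hE0 : 0 < E) (hE1 : E ≤ 1) (e2 : 1 - E ≤ β * h)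
    (hc1def : c1 = β * lamInf + C * β + C) :
    ‖((lamInf * (1 - E) + y * E + v * h * E, v * E) : ℝ × ℝ) - (y, v)‖ ≤ c1 * h := by
  have e1 : (0:ℝ) ≤ 1 - E := by linarith
  apply prod_norm_le
  · simp only [Prod.fst_sub]
    rw [abs_le]
    constructor
    · simp only [hc1def]
      nlinarith [mul_le_mul hyC e2 e1 hC0.le, mul_nonneg (mul_nonneg hv hh.le) hE0.le,
        mul_nonneg hlam.le e1, mul_nonneg hC0.le hh.le,
        mul_nonneg (mul_nonneg hβ.le hlam.le) hh.le]
    · simp only [hc1def]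
      nlinarith [mul_le_mul_of_nonneg_left e2 hlam.le, mul_nonneg hy e1,
        mul_le_mul_of_nonneg_right hvC hh.le, mul_nonneg (mul_nonneg hv hh.le) e1,
        mul_nonneg (mul_nonneg hC0.le hβ.le) hh.le]
  · simp only [Prod.snd_sub]
    rw [abs_le]
    constructor
    · simp only [hc1def]
      nlinarith [mul_le_mul hvC e2 e1 hC0.le, mul_nonneg (mul_nonneg hβ.le hlam.le) hh.le,
        mul_nonneg hC0.le hh.le]
    · simp only [hc1def]
      nlinarith [mul_nonneg hv e1, mul_nonneg (mul_nonneg hβ.le hlam.le) hh.le,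
        mul_nonneg hC0.le hh.le, mul_nonneg (mul_nonneg hC0.le hβ.le) hh.le]

lemma norm2_bound {lamInf C β h y v E c2 : ℝ} (hlam : 0 < lamInf) (hβ : 0 < β)
    (hC0 : 0 < C) (hh : 0 < h) (hy : 0 ≤ y) (hv : 0 ≤ v) (hyC : y ≤ C) (hvC : v ≤ C)
    (hE0 : 0 < E) (hE1 : E ≤ 1) (e2 : 1 - E ≤ β * h) (hq : |1 - E - β * h| ≤ (β * h) ^ 2)
    (hc2def : c2 = (lamInf + C) * β ^ 2 + C * β + C * β ^ 2) :
    ‖((lamInf * (1 - E) + y * E + v * h * E, v * E) : ℝ × ℝ) - (y, v)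
      - h • ((v + β * (lamInf - y), -(β * v)) : ℝ × ℝ)‖ ≤ c2 * (h * h) := by
  have e1 : (0:ℝ) ≤ 1 - E := by linarith
  have habs1 : |lamInf - y| ≤ lamInf + C := abs_le.mpr ⟨by linarith, by linarith⟩
  apply prod_norm_le
  · simp only [Prod.fst_sub, Prod.smul_fst, smul_eq_mul]
    have hre : lamInf * (1 - E) + y * E + v * h * E - y - h * (v + β * (lamInf - y))
        = (lamInf - y) * (1 - E - β * h) + v * h * (E - 1) := by ring
    rw [hre]
    have a1 : |(lamInf - y) * (1 - E - β * h)| ≤ (lamInf + C) * (β * h) ^ 2 := by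
      rw [abs_mul]
      exact mul_le_mul habs1 hq (abs_nonneg _) (by linarith)
    have a2 : |v * h * (E - 1)| ≤ C * h * (β * h) := by
      rw [abs_mul, abs_of_nonneg (mul_nonneg hv hh.le), abs_of_nonpos (by linarith), neg_sub]
      exact mul_le_mul (mul_le_mul_of_nonneg_right hvC hh.le) e2 e1 (by positivity)
    refine (abs_add_le _ _).trans ?_
    simp only [hc2def]
    nlinarith [sq_nonneg h, mul_nonneg (mul_nonneg hC0.le (sq_nonneg β)) (sq_nonneg h)]
  · simp only [Prod.snd_sub, Prod.smul_snd, smul_eq_mul]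
    have hre : v * E - v - h * -(β * v) = v * (β * h - (1 - E)) := by ring
    rw [hre, abs_mul, abs_of_nonneg hv]
    have hq' : |β * h - (1 - E)| ≤ (β * h) ^ 2 := by rw [abs_sub_comm]; exact hq
    simp only [hc2def]
    nlinarith [mul_le_mul hvC hq' (abs_nonneg _) hC0.le,
      mul_nonneg (mul_nonneg (by linarith : (0:ℝ) ≤ lamInf + C) (sq_nonneg β)) (sq_nonneg h),
      mul_nonneg (mul_nonneg hC0.le hβ.le) (sq_nonneg h), abs_nonneg (β * h - (1 - E)),
      mul_le_mul_of_nonneg_left hq' hv]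

lemma norm3_bound {lamInf C α β h y v E c3 c4 : ℝ} (z : ℝ) (hlam : 0 < lamInf) (hα : 0 < α)
    (hβ : 0 < β) (hC0 : 0 < C) (hh : 0 < h) (hy : 0 ≤ y) (hv : 0 ≤ v) (hyC : y ≤ C) (hvC : v ≤ C)
    (hE0 : 0 < E) (hE1 : E ≤ 1) (e2 : 1 - E ≤ β * h)
    (hc3def : c3 = β * lamInf + C * β + C + C * β) (hc4def : c4 = α * (1 + β)) :
    ‖((lamInf * (1 - E) + y * E + h * (v + α * z) * E, (v + α * z) * E) : ℝ × ℝ)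
      - (y, v + α * z)‖ ≤ h * (c3 + c4 * |z|) := by
  have e1 : (0:ℝ) ≤ 1 - E := by linarith
  have habs1 : |lamInf - y| ≤ lamInf + C := abs_le.mpr ⟨by linarith, by linarith⟩
  have hza : |v + α * z| ≤ C + α * |z| := by
    refine (abs_add_le _ _).trans ?_
    rw [abs_of_nonneg hv, abs_mul, abs_of_nonneg hα.le]
    linarith
  apply prod_norm_le
  · simp only [Prod.fst_sub]
    have hre : lamInf * (1 - E) + y * E + h * (v + α * z) * E - y
        = (lamInf - y) * (1 - E) + h * ((v + α * z) * E) := by ring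
    rw [hre]
    refine (abs_add_le _ _).trans ?_
    have a1 : |(lamInf - y) * (1 - E)| ≤ (lamInf + C) * (β * h) := by
      rw [abs_mul, abs_of_nonneg e1]
      exact mul_le_mul habs1 e2 e1 (by linarith)
    have a2 : |h * ((v + α * z) * E)| ≤ h * (C + α * |z|) := by
      rw [abs_mul, abs_of_nonneg hh.le, abs_mul, abs_of_nonneg hE0.le]
      refine mul_le_mul_of_nonneg_left ?_ hh.le
      nlinarith [abs_nonneg (v + α * z), mul_le_mul_of_nonneg_left hE1 (abs_nonneg (v + α * z))]
    simp only [hc3def, hc4def]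
    nlinarith [abs_nonneg z, mul_nonneg (mul_nonneg hα.le hβ.le) (mul_nonneg hh.le (abs_nonneg z)),
      mul_nonneg (mul_nonneg hC0.le hβ.le) hh.le]
  · simp only [Prod.snd_sub]
    have hre : (v + α * z) * E - (v + α * z) = -((v + α * z) * (1 - E)) := by ring
    rw [hre, abs_neg, abs_mul, abs_of_nonneg e1]
    have key : |v + α * z| * (1 - E) ≤ (C + α * |z|) * (β * h) :=
      mul_le_mul hza e2 e1 (by positivity)
    simp only [hc3def, hc4def]
    nlinarith [abs_nonneg z, mul_nonneg (mul_nonneg hβ.le hlam.le) hh.le,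
      mul_nonneg hC0.le hh.le, mul_nonneg (mul_nonneg hC0.le hβ.le) hh.le,
      mul_nonneg hα.le (mul_nonneg hh.le (abs_nonneg z))]

lemma sq_bound_mono {x n b M2 : ℝ} (h1 : x ≤ M2 * n * n) (hn : 0 ≤ n) (hb : n ≤ b)
    (hM2 : 0 ≤ M2) : x ≤ M2 * b * b := by
  have h2 : n * n ≤ b * b := mul_le_mul hb hb hn (hn.trans hb)
  nlinarith [mul_le_mul_of_nonneg_left h2 hM2]

lemma final_combine {A F LΦ Lu I J y h M1 M2 C c1 c2 c3 c4 m : ℝ}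
    (hh : 0 < h) (hy : 0 ≤ y) (hyC : y ≤ C)
    (hB1 : |A - F - LΦ| ≤ M2 * (c1 * h) * (c1 * h))
    (hB2 : |LΦ - h * Lu| ≤ M1 * (c2 * (h * h)))
    (hB3 : |I - J| ≤ M1 * (h * (c3 + c4 * m)))
    (hB4 : |A - F| ≤ M1 * (c1 * h))
    (hM1 : 0 ≤ M1) :
    |(A * (1 - y * h) + I * (y * h) - F) / h - (Lu + y * (J - F))|
      ≤ (M2 * c1 ^ 2 + M1 * c2 + C * M1 * c1 + C * M1 * (c3 + c4 * m) + 1) * h := by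
  have hkey : (A * (1 - y * h) + I * (y * h) - F) / h - (Lu + y * (J - F))
      = (A - F - LΦ) / h + (LΦ - h * Lu) / h + y * (F - A) + y * (I - J) := by
    field_simp
    ring
  rw [hkey]
  have t1 : |(A - F - LΦ) / h| ≤ M2 * c1 ^ 2 * h := by
    rw [abs_div, abs_of_pos hh, div_le_iff₀ hh]
    nlinarith [hB1]
  have t2 : |(LΦ - h * Lu) / h| ≤ M1 * c2 * h := by
    rw [abs_div, abs_of_pos hh, div_le_iff₀ hh]
    nlinarith [hB2]
  have t3 : |y * (F - A)| ≤ C * M1 * c1 * h := by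
    rw [abs_mul, abs_of_nonneg hy, abs_sub_comm]
    calc y * |A - F| ≤ C * (M1 * (c1 * h)) :=
          mul_le_mul hyC hB4 (abs_nonneg _) (le_trans hy hyC)
      _ = C * M1 * c1 * h := by ring
  have t4 : |y * (I - J)| ≤ C * M1 * (c3 + c4 * m) * h := by
    rw [abs_mul, abs_of_nonneg hy]
    calc y * |I - J| ≤ C * (M1 * (h * (c3 + c4 * m))) :=
          mul_le_mul hyC hB3 (abs_nonneg _) (le_trans hy hyC)
      _ = C * M1 * (c3 + c4 * m) * h := by ring
  refine le_trans (le_trans (abs_add_le _ _) (add_le_add (abs_add_three _ _ _) le_rfl)) ?_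
  nlinarith [hh.le]

set_option maxHeartbeats 1000000 in
lemma key_bound (lamInf α β : ℝ) (hlam : 0 < lamInf) (hα : 0 < α) (hβ : 0 < β)
    (ν : Measure ℝ) [IsProbabilityMeasure ν]
    (hνsupp : ν (Set.Iio 0) = 0) (hνmean : Integrable id ν)
    (f : ℝ × ℝ → ℝ) (hf : ContDiff ℝ 2 f) (hsupp : HasCompactSupport f) :
    ∃ C₀ h₀ : ℝ, 0 < C₀ ∧ 0 < h₀ ∧ ∀ h : ℝ, 0 < h → h ≤ h₀ → ∀ y v : ℝ, 0 ≤ y → 0 ≤ v →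
      |(dthpStepErlang lamInf α β h ν f y v - f (y, v)) / h -
        hawkesGenErlang lamInf α β ν f y v| ≤ C₀ * h := by
  obtain ⟨R, hRpos, hR⟩ : ∃ R : ℝ, 0 < R ∧ tsupport f ⊆ Metric.closedBall 0 R := by
    obtain ⟨R₀, hR₀⟩ := hsupp.isBounded.subset_closedBall 0
    exact ⟨|R₀| + 1, by positivity, hR₀.trans (Metric.closedBall_subset_closedBall
      (by linarith [le_abs_self R₀]))⟩
  obtain ⟨C, hCdef⟩ : ∃ x : ℝ, x = 2 * R + 1 := ⟨_, rfl⟩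
  have hC0 : 0 < C := by rw [hCdef]; positivity
  have hfz : ∀ q : ℝ × ℝ, R < ‖q‖ → f q = 0 := by
    intro q hq
    apply image_eq_zero_of_notMem_tsupport
    intro hmem
    have := hR hmem
    rw [Metric.mem_closedBall, dist_zero_right] at this
    linarith
  have hLz : ∀ q : ℝ × ℝ, R < ‖q‖ → fderiv ℝ f q = 0 := by
    intro q hq
    by_contra hne
    have hmem : q ∈ Function.support (fderiv ℝ f) := hne
    have := hR (support_fderiv_subset ℝ hmem)
    rw [Metric.mem_closedBall, dist_zero_right] at this
    linarith
  obtain ⟨M0, hM0⟩ := hsupp.exists_bound_of_continuous hf.continuous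
  obtain ⟨M1', hM1'⟩ := (hsupp.fderiv ℝ).exists_bound_of_continuous
    (hf.continuous_fderiv two_ne_zero)
  obtain ⟨M1, hM1def⟩ : ∃ x : ℝ, x = max M1' 1 := ⟨_, rfl⟩
  have hM1 : ∀ x, ‖fderiv ℝ f x‖ ≤ M1 := fun x => (hM1' x).trans (hM1def ▸ le_max_left _ _)
  have hM1pos : (1:ℝ) ≤ M1 := hM1def ▸ le_max_right _ _
  have hM1nn : (0:ℝ) ≤ M1 := by linarith
  obtain ⟨M2', hM2'⟩ := ((hf.fderiv_right (by norm_num) : ContDiff ℝ 1 (fderiv ℝ f)).continuous_fderiv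
    one_ne_zero).bounded_above_of_compact_support ((hsupp.fderiv ℝ).fderiv ℝ)
  obtain ⟨M2, hM2def⟩ : ∃ x : ℝ, x = max M2' 0 := ⟨_, rfl⟩
  have hM2 : ∀ x, ‖fderiv ℝ (fderiv ℝ f) x‖ ≤ M2 := fun x => (hM2' x).trans (hM2def ▸ le_max_left _ _)
  have hM2nn : (0:ℝ) ≤ M2 := hM2def ▸ le_max_right _ _
  have hlip : ∀ p q : ℝ × ℝ, |f q - f p| ≤ M1 * ‖q - p‖ := by
    intro p q
    have := (convex_univ : Convex ℝ (Set.univ : Set (ℝ × ℝ))).norm_image_sub_le_of_norm_fderiv_le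
      (fun z _ => (hf.differentiable two_ne_zero) z) (fun z _ => hM1 z) trivial trivial
      (x := p) (y := q)
    simpa [Real.norm_eq_abs] using this
  have htay := taylor2 hf hM2
  have hintabs : Integrable (fun z : ℝ => |z|) ν := by
    simpa using hνmean.abs
  obtain ⟨m, hmdef⟩ : ∃ x : ℝ, x = ∫ z, |z| ∂ν := ⟨_, rfl⟩
  have hm0 : 0 ≤ m := hmdef ▸ integral_nonneg (fun z => abs_nonneg z)
  have hae : ∀ᵐ z ∂ν, 0 ≤ z := by
    rw [ae_iff]
    convert hνsupp using 2
    ext z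
    simp [not_le]
  have intcb : ∀ g : ℝ → ℝ, Continuous g → (∀ z, |g z| ≤ M0) → Integrable g ν := by
    intro g hg hb
    exact (integrable_const M0).mono' hg.aestronglyMeasurable
      (ae_of_all _ fun z => by simpa [Real.norm_eq_abs] using hb z)
  obtain ⟨c1, hc1def⟩ : ∃ x : ℝ, x = β * lamInf + C * β + C := ⟨_, rfl⟩
  obtain ⟨c2, hc2def⟩ : ∃ x : ℝ, x = (lamInf + C) * β ^ 2 + C * β + C * β ^ 2 := ⟨_, rfl⟩
  obtain ⟨c3, hc3def⟩ : ∃ x : ℝ, x = β * lamInf + C * β + C + C * β := ⟨_, rfl⟩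
  obtain ⟨c4, hc4def⟩ : ∃ x : ℝ, x = α * (1 + β) := ⟨_, rfl⟩
  have hC₀pos : 0 < M2 * c1 ^ 2 + M1 * c2 + C * M1 * c1 + C * M1 * (c3 + c4 * m) + 1 := by
    have h1 : 0 < c1 := by rw [hc1def]; positivity
    have h2 : 0 ≤ c2 := by rw [hc2def]; positivity
    have h3 : 0 ≤ c3 := by rw [hc3def]; positivity
    have h4 : 0 ≤ c4 := by rw [hc4def]; positivity
    nlinarith [mul_nonneg (mul_nonneg hC0.le hM1nn) h1.le,
      mul_nonneg hM2nn (sq_nonneg c1),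
      mul_nonneg hM1nn h2,
      mul_nonneg (mul_nonneg hC0.le hM1nn) (by nlinarith : (0:ℝ) ≤ c3 + c4 * m)]
  refine ⟨M2 * c1 ^ 2 + M1 * c2 + C * M1 * c1 + C * M1 * (c3 + c4 * m) + 1,
    min (1 / (2 * β)) (1 / (2 * C)), hC₀pos, by positivity, ?_⟩
  intro h hh hh0 y v hy hv
  have hhβ : β * h ≤ 1 / 2 := by
    have h1 : h ≤ 1 / (2 * β) := hh0.trans (min_le_left _ _)
    calc β * h ≤ β * (1 / (2 * β)) := mul_le_mul_of_nonneg_left h1 hβ.le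
    _ = 1 / 2 := by rw [mul_one_div, mul_comm 2 β, ← div_div, div_self hβ.ne']
  have hhC : C * h ≤ 1 / 2 := by
    have h1 : h ≤ 1 / (2 * C) := hh0.trans (min_le_right _ _)
    calc C * h ≤ C * (1 / (2 * C)) := mul_le_mul_of_nonneg_left h1 hC0.le
    _ = 1 / 2 := by rw [mul_one_div, mul_comm 2 C, ← div_div, div_self hC0.ne']
  simp only [dthpStepErlang, hawkesGenErlang]
  have hbh : (0:ℝ) ≤ β * h := by positivity
  obtain ⟨E, hEdef⟩ : ∃ x : ℝ, x = Real.exp (-β * h) := ⟨_, rfl⟩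
  rw [← hEdef]
  have hE_lb : 1 - β * h ≤ E := by
    rw [hEdef, neg_mul]; exact (exp_neg_bounds (β * h) hbh).1
  have hE_ub : E ≤ 1 - β * h + (β * h) ^ 2 := by
    rw [hEdef, neg_mul]; exact (exp_neg_bounds (β * h) hbh).2
  have hE0 : (0:ℝ) < E := hEdef ▸ Real.exp_pos _
  have hE1 : E ≤ 1 := by nlinarith [hbh, hhβ]
  have hEhalf : 1 / 2 ≤ E := by linarith
  have e1 : (0:ℝ) ≤ 1 - E := by linarith
  have e2 : 1 - E ≤ β * h := by linarith
  have hq : |1 - E - β * h| ≤ (β * h) ^ 2 :=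
    abs_le.mpr ⟨by linarith, by linarith [sq_nonneg (β * h)]⟩
  by_cases hcase : y ≤ C ∧ v ≤ C
  · -- main case: Taylor expansion
    obtain ⟨hyC, hvC⟩ := hcase
    have hyh : y * h < 1 := by linarith [mul_le_mul_of_nonneg_right hyC hh.le]
    simp only [if_pos hyh, if_neg (not_le.mpr hyh), mul_one, mul_zero, add_zero]
    have hcont1 : Continuous fun z : ℝ => f (y, v + α * z) := hf.continuous.comp (by fun_prop)
    have hcont2 : Continuous fun z : ℝ =>
        f (lamInf * (1 - E) + y * E + h * (v + α * z) * E, (v + α * z) * E) :=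
      hf.continuous.comp (by fun_prop)
    have hint1 : Integrable (fun z : ℝ => f (y, v + α * z)) ν :=
      intcb _ hcont1 fun z => by simpa [Real.norm_eq_abs] using hM0 (y, v + α * z)
    have hint2 : Integrable (fun z : ℝ =>
        f (lamInf * (1 - E) + y * E + h * (v + α * z) * E, (v + α * z) * E)) ν :=
      intcb _ hcont2 fun z => by simpa [Real.norm_eq_abs] using hM0 _
    have hJ : ∫ z, (f (y, v + α * z) - f (y, v)) ∂ν
        = (∫ z, f (y, v + α * z) ∂ν) - f (y, v) := by
      rw [integral_sub hint1 (integrable_const _), integral_const]; simp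
    rw [hJ]
    have hD : (v + β * (lamInf - y)) * (fderiv ℝ f (y, v)) (1, 0)
        - β * v * (fderiv ℝ f (y, v)) (0, 1)
        = (fderiv ℝ f (y, v)) (v + β * (lamInf - y), -(β * v)) := by
      have hu : ((v + β * (lamInf - y), -(β * v)) : ℝ × ℝ)
          = (v + β * (lamInf - y)) • ((1:ℝ), (0:ℝ)) + (-(β * v)) • ((0:ℝ), (1:ℝ)) := by
        simp [Prod.ext_iff]
      rw [hu, map_add, _root_.map_smul, _root_.map_smul, smul_eq_mul, smul_eq_mul]; ring
    rw [hD]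
    have hnorm1 := norm1_bound hlam hβ hC0 hh hy hv hyC hvC hE0 hE1 e2 hc1def
    have hnorm2 := norm2_bound hlam hβ hC0 hh hy hv hyC hvC hE0 hE1 e2 hq hc2def
    have hnorm3 := fun z : ℝ =>
      norm3_bound z hlam hα hβ hC0 hh hy hv hyC hvC hE0 hE1 e2 hc3def hc4def
    have hc1h : (0:ℝ) ≤ c1 * h := by
      have : 0 < c1 := by rw [hc1def]; positivity
      positivity
    have hB1 : |f (lamInf * (1 - E) + y * E + v * h * E, v * E) - f (y, v)
        - fderiv ℝ f (y, v) ((lamInf * (1 - E) + y * E + v * h * E, v * E) - (y, v))|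
        ≤ M2 * (c1 * h) * (c1 * h) := by
      have := htay (y, v) (lamInf * (1 - E) + y * E + v * h * E, v * E)
      rw [Real.norm_eq_abs] at this
      exact sq_bound_mono this (norm_nonneg _) hnorm1 hM2nn
    have hB2 : |fderiv ℝ f (y, v) ((lamInf * (1 - E) + y * E + v * h * E, v * E) - (y, v))
        - h * (fderiv ℝ f (y, v)) (v + β * (lamInf - y), -(β * v))|
        ≤ M1 * (c2 * (h * h)) := by
      have hw : fderiv ℝ f (y, v) ((lamInf * (1 - E) + y * E + v * h * E, v * E) - (y, v))
          - h * (fderiv ℝ f (y, v)) (v + β * (lamInf - y), -(β * v))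
          = fderiv ℝ f (y, v) ((lamInf * (1 - E) + y * E + v * h * E, v * E) - (y, v)
            - h • ((v + β * (lamInf - y), -(β * v)) : ℝ × ℝ)) := by
        have h1 := (fderiv ℝ f (y, v)).map_sub
          ((lamInf * (1 - E) + y * E + v * h * E, v * E) - (y, v))
          (h • ((v + β * (lamInf - y), -(β * v)) : ℝ × ℝ))
        have h2 := (fderiv ℝ f (y, v)).map_smul h
          ((v + β * (lamInf - y), -(β * v)) : ℝ × ℝ)
        rw [h1, h2, smul_eq_mul]
      rw [hw, ← Real.norm_eq_abs]
      exact ((fderiv ℝ f (y, v)).le_opNorm _).trans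
        (mul_le_mul (hM1 _) hnorm2 (norm_nonneg _) hM1nn)
    have hB4 : |f (lamInf * (1 - E) + y * E + v * h * E, v * E) - f (y, v)| ≤ M1 * (c1 * h) :=
      (hlip _ _).trans (mul_le_mul_of_nonneg_left hnorm1 hM1nn)
    have hB3 : |(∫ z, f (lamInf * (1 - E) + y * E + h * (v + α * z) * E, (v + α * z) * E) ∂ν)
        - ∫ z, f (y, v + α * z) ∂ν| ≤ M1 * (h * (c3 + c4 * m)) := by
      rw [← integral_sub hint2 hint1]
      have hple : ∀ z : ℝ,
          |f (lamInf * (1 - E) + y * E + h * (v + α * z) * E, (v + α * z) * E)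
            - f (y, v + α * z)| ≤ M1 * (h * (c3 + c4 * |z|)) := fun z =>
        (hlip _ _).trans (by
          have := mul_le_mul_of_nonneg_left (hnorm3 z) hM1nn
          linarith)
      have hintb : Integrable (fun z : ℝ => M1 * (h * (c3 + c4 * |z|))) ν := by
        have hfe : (fun z : ℝ => M1 * (h * (c3 + c4 * |z|)))
            = fun z => M1 * (h * c3) + M1 * h * c4 * |z| := by funext z; ring
        rw [hfe]
        exact (integrable_const _).add (hintabs.const_mul _)
      calc |∫ z, (f (lamInf * (1 - E) + y * E + h * (v + α * z) * E, (v + α * z) * E)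
              - f (y, v + α * z)) ∂ν|
          ≤ ∫ z, |f (lamInf * (1 - E) + y * E + h * (v + α * z) * E, (v + α * z) * E)
              - f (y, v + α * z)| ∂ν := by
            have := norm_integral_le_integral_norm (μ := ν)
              (fun z => f (lamInf * (1 - E) + y * E + h * (v + α * z) * E, (v + α * z) * E)
                - f (y, v + α * z))
            simpa [Real.norm_eq_abs] using this
        _ ≤ ∫ z, M1 * (h * (c3 + c4 * |z|)) ∂ν :=
            integral_mono (hint2.sub hint1).abs hintb hple
        _ = M1 * (h * c3) + M1 * h * c4 * m := by
            rw [show (fun z : ℝ => M1 * (h * (c3 + c4 * |z|)))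
                = fun z : ℝ => M1 * (h * c3) + M1 * h * c4 * |z| from funext fun z => by ring,
              integral_add (integrable_const _) (hintabs.const_mul _), integral_const,
              integral_const_mul, ← hmdef]
            simp
        _ ≤ M1 * (h * (c3 + c4 * m)) := le_of_eq (by ring)
    exact final_combine hh hy hyC hB1 hB2 hB3 hB4 hM1nn
  · -- vanishing case
    have hCR : R < C := by rw [hCdef]; linarith
    rcases not_and_or.mp hcase with hyC | hvC
    · push_neg at hyC
      have hyR : R < y := lt_trans hCR hyC
      have hnp : R < ‖((y, v) : ℝ × ℝ)‖ := by
        refine lt_of_lt_of_le hyR ?_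
        rw [Prod.norm_def]
        simp only [Real.norm_eq_abs]
        exact le_max_of_le_left (le_abs_self y)
      have hfp : f (y, v) = 0 := hfz _ hnp
      have hL : fderiv ℝ f (y, v) = 0 := hLz _ hnp
      have hyE : R < y * E := by
        rw [hCdef] at hyC
        linarith [mul_le_mul_of_nonneg_left hEhalf hy]
      have hfΦ : f (lamInf * (1 - E) + y * E + v * h * E, v * E) = 0 := by
        apply hfz
        rw [Prod.norm_def]
        simp only [Real.norm_eq_abs]
        refine lt_of_lt_of_le ?_ (le_max_of_le_left (le_abs_self _))
        linarith [hyE, mul_nonneg hlam.le e1, mul_nonneg (mul_nonneg hv hh.le) hE0.le]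
      have hI0 : (∫ z, f (lamInf * (1 - E) + y * E + h * (v + α * z) * E,
          (v + α * z) * E) ∂ν) = 0 := by
        apply integral_eq_zero_of_ae
        filter_upwards [hae] with z hz
        apply hfz
        rw [Prod.norm_def]
        simp only [Real.norm_eq_abs]
        refine lt_of_lt_of_le ?_ (le_max_of_le_left (le_abs_self _))
        have hvz : (0:ℝ) ≤ v + α * z := by linarith [mul_nonneg hα.le hz]
        linarith [mul_nonneg hlam.le e1, hyE,
          mul_nonneg (mul_nonneg hh.le hvz) hE0.le]
      have hGI : (∫ z, (f (y, v + α * z) - f (y, v)) ∂ν) = 0 := by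
        apply integral_eq_zero_of_ae
        filter_upwards with z
        rw [hfp, sub_zero]
        apply hfz
        rw [Prod.norm_def]
        simp only [Real.norm_eq_abs]
        exact lt_of_lt_of_le hyR (le_max_of_le_left (le_abs_self _))
      rw [hfΦ, hI0, hGI, hfp, hL]
      simp only [ContinuousLinearMap.zero_apply, zero_mul, mul_zero, add_zero, sub_zero, zero_add, sub_self, zero_div, abs_zero, neg_zero]
      exact mul_nonneg hC₀pos.le hh.le
    · push_neg at hvC
      have hvR : R < v := lt_trans hCR hvC
      have hnp : R < ‖((y, v) : ℝ × ℝ)‖ := by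
        refine lt_of_lt_of_le hvR ?_
        rw [Prod.norm_def]
        simp only [Real.norm_eq_abs]
        exact le_max_of_le_right (le_abs_self v)
      have hfp : f (y, v) = 0 := hfz _ hnp
      have hL : fderiv ℝ f (y, v) = 0 := hLz _ hnp
      have hvE : R < v * E := by
        rw [hCdef] at hvC
        linarith [mul_le_mul_of_nonneg_left hEhalf hv]
      have hfΦ : f (lamInf * (1 - E) + y * E + v * h * E, v * E) = 0 := by
        apply hfz
        rw [Prod.norm_def]
        simp only [Real.norm_eq_abs]
        exact lt_of_lt_of_le hvE (le_max_of_le_right (le_abs_self _))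
      have hI0 : (∫ z, f (lamInf * (1 - E) + y * E + h * (v + α * z) * E,
          (v + α * z) * E) ∂ν) = 0 := by
        apply integral_eq_zero_of_ae
        filter_upwards [hae] with z hz
        apply hfz
        rw [Prod.norm_def]
        simp only [Real.norm_eq_abs]
        refine lt_of_lt_of_le ?_ (le_max_of_le_right (le_abs_self _))
        have hvz : v ≤ v + α * z := by linarith [mul_nonneg hα.le hz]
        linarith [hvE, mul_le_mul_of_nonneg_right hvz hE0.le]
      have hGI : (∫ z, (f (y, v + α * z) - f (y, v)) ∂ν) = 0 := by
        apply integral_eq_zero_of_ae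
        filter_upwards [hae] with z hz
        rw [hfp, sub_zero]
        apply hfz
        rw [Prod.norm_def]
        simp only [Real.norm_eq_abs]
        refine lt_of_lt_of_le ?_ (le_max_of_le_right (le_abs_self _))
        linarith [hvR, mul_nonneg hα.le hz]
      rw [hfΦ, hI0, hGI, hfp, hL]
      simp only [ContinuousLinearMap.zero_apply, zero_mul, mul_zero, add_zero, sub_zero, zero_add, sub_self, zero_div, abs_zero, neg_zero]
      exact mul_nonneg hC₀pos.le hh.le

/-- For `f ∈ C²_c([0,∞)²)`, the discrete generators `(T^N f - f)/h_N` of the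
Erlang-kernel discrete Hawkes chain converge uniformly on `[0, ∞)²` to the generator
`A f` of the continuous Hawkes intensity–auxiliary pair, as `N → ∞` (`h_N = T/N`). -/
theorem dthp_generator_convergence_erlang
    (lamInf α β T : ℝ) (hlam : 0 < lamInf) (hα : 0 < α) (hβ : 0 < β) (hT : 0 < T)
    (ν : Measure ℝ) [IsProbabilityMeasure ν]
    (hνsupp : ν (Set.Iio 0) = 0) (hνmean : Integrable id ν)
    (f : ℝ × ℝ → ℝ) (hf : ContDiff ℝ 2 f) (hsupp : HasCompactSupport f) :
    Tendsto
      (fun N : ℕ => ⨆ p : {p : ℝ × ℝ // 0 ≤ p.1 ∧ 0 ≤ p.2},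
        |(dthpStepErlang lamInf α β (T / N) ν f (p : ℝ × ℝ).1 (p : ℝ × ℝ).2 -
            f p) / (T / N) -
          hawkesGenErlang lamInf α β ν f (p : ℝ × ℝ).1 (p : ℝ × ℝ).2|)
      atTop (nhds 0) := by
  obtain ⟨C₀, h₀, hC₀, hh₀, hbound⟩ :=
    key_bound lamInf α β hlam hα hβ ν hνsupp hνmean f hf hsupp
  haveI hne : Nonempty {p : ℝ × ℝ // 0 ≤ p.1 ∧ 0 ≤ p.2} :=
    ⟨⟨(0, 0), le_refl 0, le_refl 0⟩⟩
  have hev : ∀ᶠ N : ℕ in atTop, (0 < (N : ℝ) ∧ T / h₀ ≤ (N : ℝ)) := by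
    filter_upwards [tendsto_natCast_atTop_atTop.eventually_ge_atTop (max 1 (T / h₀))] with N hN
    constructor
    · linarith [le_max_left 1 (T / h₀), hN]
    · linarith [le_max_right 1 (T / h₀)]
  have key : ∀ N : ℕ, 0 < (N : ℝ) → T / h₀ ≤ (N : ℝ) →
      ∀ p : {p : ℝ × ℝ // 0 ≤ p.1 ∧ 0 ≤ p.2},
        |(dthpStepErlang lamInf α β (T / N) ν f (p : ℝ × ℝ).1 (p : ℝ × ℝ).2 -
            f p) / (T / N) -
          hawkesGenErlang lamInf α β ν f (p : ℝ × ℝ).1 (p : ℝ × ℝ).2| ≤ C₀ * (T / N) := by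
    intro N hN1 hN2 p
    have hTN : 0 < T / (N : ℝ) := div_pos hT hN1
    have hle : T / (N : ℝ) ≤ h₀ := by
      rw [div_le_iff₀ hN1]
      have := (div_le_iff₀ hh₀).mp hN2
      linarith [mul_comm h₀ (N : ℝ)]
    exact hbound (T / N) hTN hle (p : ℝ × ℝ).1 (p : ℝ × ℝ).2 p.2.1 p.2.2
  apply tendsto_of_tendsto_of_tendsto_of_le_of_le' (tendsto_const_nhds (x := (0:ℝ)))
    (show Tendsto (fun N : ℕ => C₀ * (T / N)) atTop (nhds 0) by
      simpa using (tendsto_const_div_atTop_nhds_zero_nat T).const_mul C₀)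
  · filter_upwards [hev] with N hN
    have hbdd : BddAbove (Set.range fun p : {p : ℝ × ℝ // 0 ≤ p.1 ∧ 0 ≤ p.2} =>
        |(dthpStepErlang lamInf α β (T / N) ν f (p : ℝ × ℝ).1 (p : ℝ × ℝ).2 -
            f p) / (T / N) -
          hawkesGenErlang lamInf α β ν f (p : ℝ × ℝ).1 (p : ℝ × ℝ).2|) := by
      refine ⟨C₀ * (T / N), ?_⟩
      rintro x ⟨p, rfl⟩
      exact key N hN.1 hN.2 p
    exact le_trans (abs_nonneg _) (le_ciSup hbdd hne.some)
  · filter_upwards [hev] with N hN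
    exact ciSup_le (key N hN.1 hN.2)
end
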